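/- The following values of complementary Ramsey numbers hold: R̄(4;6) = 5; R̄(5;k) = 6 for every integer k with 8 ≤ k ≤ 10; R̄(6;8) = 11; R̄(6;10) = 8; and R̄(6;k) = 7 for every integer k with 11 ≤ k ≤ 15. -/

import Mathlib

open Finset

/-- The color-`i` graph `f⁻¹(i)` of an edge `k`-coloring `f` of the complete
graph on `Fin n`. -/
def colorGraph {n k : ℕ} (f : Sym2 (Fin n) → Fin k) (i : Fin k) :
    SimpleGraph (Fin n) where
  Adj x y := x ≠ y ∧ f s(x, y) = i
  symm := by
    constructor
    rintro x y ⟨hxy, hf⟩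
    exact ⟨hxy.symm, by rwa [Sym2.eq_swap]⟩
  loopless := by constructor; rintro x ⟨h, -⟩; exact h rfl

/-- `α_i(f) ≥ m` : the graph `f⁻¹(i)` has an independent set of size `m`. -/
def HasIndep {n k : ℕ} (f : Sym2 (Fin n) → Fin k) (i : Fin k) (m : ℕ) : Prop :=
  ∃ s : Finset (Fin n), s.card = m ∧ ∀ x ∈ s, ∀ y ∈ s, x ≠ y → f s(x, y) ≠ i

/-- `ω_i(f) ≥ m` : the graph `f⁻¹(i)` has a clique of size `m`. -/
def HasClique {n k : ℕ} (f : Sym2 (Fin n) → Fin k) (i : Fin k) (m : ℕ) : Prop :=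
  ∃ s : Finset (Fin n), s.card = m ∧ ∀ x ∈ s, ∀ y ∈ s, x ≠ y → f s(x, y) = i

/-- The complementary Ramsey number `R̄(m 0, …, m (k-1))`: the least `n` such
that every edge `k`-coloring of `K_n` admits a color `i` with `α_i(f) ≥ m i`. -/
noncomputable def cRamsey {k : ℕ} (m : Fin k → ℕ) : ℕ :=
  sInf {n : ℕ | ∀ f : Sym2 (Fin n) → Fin k, ∃ i : Fin k, HasIndep f i (m i)}

/-- `R̄(m; k)`, i.e. `R̄(m, …, m)` with `m` repeated `k` times. -/
noncomputable def cRamseyU (m k : ℕ) : ℕ := cRamsey (fun _ : Fin k => m)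

/-- The classical multicolor Ramsey number `R(m 0, …, m (k-1))`. -/
noncomputable def ramsey {k : ℕ} (m : Fin k → ℕ) : ℕ :=
  sInf {n : ℕ | ∀ f : Sym2 (Fin n) → Fin k, ∃ i : Fin k, HasClique f i (m i)}

/-- `G` is the disjoint union of `r` copies of `K_{q+1}` and `n - r` copies of
`K_q`: there is a partition of the vertices into `n` parts, `r` of size `q+1`
and `n - r` of size `q`, with two vertices adjacent iff they are distinct and
lie in a common part. -/
def IsCliquePartition {N : ℕ} (G : SimpleGraph (Fin N)) (n q r : ℕ) : Prop :=
  ∃ P : Fin N → Fin n,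
    (∀ x y, G.Adj x y ↔ x ≠ y ∧ P x = P y) ∧
    ∀ j : Fin n,
      (Finset.univ.filter (fun x => P x = j)).card = if (j : ℕ) < r then q + 1 else q

/-- The family `H` of spanning subgraphs is a factorization of the complete
graph: every edge of `K_N` lies in exactly one of the `H i`. -/
def IsFactorization {N k : ℕ} (H : Fin k → SimpleGraph (Fin N)) : Prop :=
  ∀ x y : Fin N, x ≠ y → ∃! i : Fin k, (H i).Adj x y

/-- `f_i(x)`: the number of vertices `y ≠ x` with `f({x, y}) = i`. -/
def degColor {n k : ℕ} (f : Sym2 (Fin n) → Fin k) (i : Fin k) (x : Fin n) : ℕ :=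
  (Finset.univ.filter (fun y => y ≠ x ∧ f s(x, y) = i)).card

/-- `t̄_n(m)`: the number of edges of `T̄_n(m) = r K_{q+1} ∪ (n-r) K_q`, where
`m = n * q + r` with `0 ≤ r < n`. -/
def tbar (n m : ℕ) : ℕ :=
  (m % n) * Nat.choose (m / n + 1) 2 + (n - m % n) * Nat.choose (m / n) 2

/-!
Upper bounds count edges. Deleting one endpoint of every edge shows that a graph with `e` edges
on `N` vertices has an independent set of size `N - e`, and of size `N + 1 - e` when some vertex
has degree at least two (delete that vertex first). The `k` colour classes share the `C(N, 2)`
edges of `K_N`, so when `C(N, 2)` is small one class has too few edges.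

Lower bounds are explicit colourings of `K_{N-1}`: on `K₄`, `K₅`, `K₆` every colour is used, so
no class is independent on all vertices; on `K₇` every class has an edge avoiding any given
vertex; on `K₁₀` every class contains a perfect matching, which meets every set of six vertices.
-/

namespace SimpleGraph

variable {V : Type*} [Fintype V] {G : SimpleGraph V} {s : Finset V}

theorem IsIndepSet.card_lt_of_adj (hs : G.IsIndepSet ↑s) {x y : V} (hxy : G.Adj x y) :
    #s < Fintype.card V := by
  by_contra! h
  have hs_univ : s = univ := eq_univ_of_card s (le_antisymm (card_le_univ s) h)
  exact hs (by simp [hs_univ]) (by simp [hs_univ]) hxy.ne hxy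

variable [DecidableEq V]

section EdgeCount

variable (G) [DecidableRel G.Adj]

theorem exists_isIndepSet_card_le_add (X : Finset V) :
    ∃ s : Finset V, G.IsIndepSet ↑s ∧
      Fintype.card V ≤ #s + #X + #{e ∈ G.edgeFinset | ∀ v ∈ X, v ∉ e} := by
  set c := X ∪ {e ∈ G.edgeFinset | ∀ v ∈ X, v ∉ e}.image (·.out.1)
  have hc : G.IsVertexCover ↑c := by
    intro v w hvw
    by_cases hX : v ∈ X ∨ w ∈ X
    · simp only [c, coe_union, Set.mem_union, mem_coe]
      tauto
    · have hout := Sym2.out_fst_mem s(v, w)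
      have he : s(v, w) ∈ {e ∈ G.edgeFinset | ∀ u ∈ X, u ∉ e} := by
        simp only [mem_filter, mem_edgeFinset, mem_edgeSet, Sym2.mem_iff]
        grind
      rw [Sym2.mem_iff] at hout
      have := mem_image_of_mem (·.out.1) he
      rcases hout with h | h <;> [left; right] <;>
        exact mem_coe.2 (mem_union_right _ (h ▸ this))
  have hcard : #c ≤ #X + #{e ∈ G.edgeFinset | ∀ v ∈ X, v ∉ e} :=
    (card_union_le _ _).trans (Nat.add_le_add_left card_image_le _)
  refine ⟨cᶜ, by rwa [coe_compl, isIndepSet_compl_iff_isVertexCover], ?_⟩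
  have := card_compl_add_card c
  omega

theorem exists_isIndepSet_card_le_add_card_edgeFinset :
    ∃ s : Finset V, G.IsIndepSet ↑s ∧ Fintype.card V ≤ #s + #G.edgeFinset := by
  simpa using G.exists_isIndepSet_card_le_add ∅

theorem exists_isIndepSet_card_add_degree_le (x : V) :
    ∃ s : Finset V, G.IsIndepSet ↑s ∧
      Fintype.card V + G.degree x ≤ #s + 1 + #G.edgeFinset := by
  obtain ⟨s, hs, hcard⟩ := G.exists_isIndepSet_card_le_add {x}
  have hsplit := card_filter_add_card_filter_not (s := G.edgeFinset) (x ∈ ·)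
  rw [← incidenceFinset_eq_filter, card_incidenceFinset_eq_degree] at hsplit
  simp only [mem_singleton, forall_eq, card_singleton] at hcard
  exact ⟨s, hs, by omega⟩

theorem exists_isIndepSet_le_card_of_card_edgeFinset_add_le {m : ℕ}
    (h : #G.edgeFinset + m ≤ Fintype.card V) :
    ∃ s : Finset V, G.IsIndepSet ↑s ∧ m ≤ #s := by
  obtain ⟨s, hs, hcard⟩ := G.exists_isIndepSet_card_le_add_card_edgeFinset
  exact ⟨s, hs, by omega⟩

/-- A vertex of degree at least two saves one vertex in the cover; otherwise `G` is a matching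
and has at most `card V / 2` edges. -/
theorem exists_isIndepSet_le_card_of_card_edgeFinset_add_le_succ {m : ℕ}
    (h : #G.edgeFinset + m ≤ Fintype.card V + 1) (hm : 2 * m ≤ Fintype.card V + 1) :
    ∃ s : Finset V, G.IsIndepSet ↑s ∧ m ≤ #s := by
  by_cases hdeg : ∃ x, 2 ≤ G.degree x
  · obtain ⟨x, hx⟩ := hdeg
    obtain ⟨s, hs, hcard⟩ := G.exists_isIndepSet_card_add_degree_le x
    exact ⟨s, hs, by omega⟩
  · push Not at hdeg
    have hmatching : 2 * #G.edgeFinset ≤ Fintype.card V := by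
      rw [← sum_degrees_eq_twice_card_edges]
      simpa using sum_le_sum fun x (_ : x ∈ univ) => Nat.le_of_lt_succ (hdeg x)
    exact G.exists_isIndepSet_le_card_of_card_edgeFinset_add_le (by omega)

end EdgeCount

theorem IsIndepSet.card_add_one_lt [Nonempty V] (hs : G.IsIndepSet ↑s)
    (h : ∀ v, ∃ x y, G.Adj x y ∧ x ≠ v ∧ y ≠ v) : #s + 1 < Fintype.card V := by
  by_contra! hcard
  obtain ⟨v, hv⟩ := card_le_one_iff_subset_singleton.1 <|
    show #sᶜ ≤ 1 by rw [card_compl]; omega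
  have hmem : ∀ u, u ≠ v → u ∈ s := fun u hu => by
    by_contra hus
    exact hu (mem_singleton.1 (hv (mem_compl.2 hus)))
  obtain ⟨x, y, hxy, hx, hy⟩ := h v
  exact hs (hmem x hx) (hmem y hy) hxy.ne hxy

theorem IsIndepSet.two_mul_card_le (hs : G.IsIndepSet ↑s) {σ : V → V}
    (hσ : Function.Involutive σ) (hadj : ∀ x, G.Adj x (σ x)) : 2 * #s ≤ Fintype.card V := by
  have hdisj : Disjoint s (s.image σ) := by
    refine Finset.disjoint_left.2 fun x hx hx' => ?_
    obtain ⟨y, hy, rfl⟩ := mem_image.1 hx'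
    exact hs hy hx (hadj y).ne (hadj y)
  have := card_le_univ (s ∪ s.image σ)
  rw [card_union_of_disjoint hdisj, card_image_of_injective _ hσ.injective] at this
  omega

end SimpleGraph

section Colorings

variable {n k : ℕ}

instance (f : Sym2 (Fin n) → Fin k) (i : Fin k) : DecidableRel (colorGraph f i).Adj :=
  fun x y => inferInstanceAs (Decidable (x ≠ y ∧ f s(x, y) = i))

theorem hasIndep_iff {f : Sym2 (Fin n) → Fin k} {i : Fin k} {m : ℕ} :
    HasIndep f i m ↔ ∃ s : Finset (Fin n), (colorGraph f i).IsIndepSet ↑s ∧ #s = m := by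
  simp only [HasIndep, SimpleGraph.isIndepSet_iff, Set.Pairwise, mem_coe, colorGraph]
  grind

theorem hasIndep_of_isIndepSet {f : Sym2 (Fin n) → Fin k} {i : Fin k} {m : ℕ}
    {s : Finset (Fin n)} (hs : (colorGraph f i).IsIndepSet ↑s) (hm : m ≤ #s) :
    HasIndep f i m := by
  obtain ⟨t, hts, rfl⟩ := exists_subset_card_eq hm
  exact hasIndep_iff.2 ⟨t, hs.mono (coe_subset.2 hts), rfl⟩

theorem not_hasIndep_of_forall_card_lt {f : Sym2 (Fin n) → Fin k} {i : Fin k} {m : ℕ}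
    (h : ∀ s : Finset (Fin n), (colorGraph f i).IsIndepSet ↑s → #s < m) :
    ¬ HasIndep f i m := by
  rw [hasIndep_iff]
  rintro ⟨s, hs, rfl⟩
  exact (h s hs).false

theorem edgeFinset_colorGraph (f : Sym2 (Fin n) → Fin k) (i : Fin k) :
    (colorGraph f i).edgeFinset = {e ∈ (⊤ : SimpleGraph (Fin n)).edgeFinset | f e = i} := by
  ext e
  induction e using Sym2.ind
  simp only [mem_filter, SimpleGraph.mem_edgeFinset, SimpleGraph.mem_edgeSet,
    SimpleGraph.top_adj]
  rfl

theorem sum_card_edgeFinset_colorGraph (f : Sym2 (Fin n) → Fin k) :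
    ∑ i, #(colorGraph f i).edgeFinset = n.choose 2 := by
  simp_rw [edgeFinset_colorGraph]
  rw [← card_eq_sum_card_fiberwise (fun e _ => mem_univ (f e)),
    SimpleGraph.card_edgeFinset_top_eq_card_choose_two, Fintype.card_fin]

theorem exists_hasIndep_of_choose_lt_mul {f : Sym2 (Fin n) → Fin k} {m : ℕ} (L : ℕ)
    (hL : ∀ i, ¬ HasIndep f i m → L ≤ #(colorGraph f i).edgeFinset)
    (h : n.choose 2 < k * L) : ∃ i, HasIndep f i m := by
  by_contra! hf
  have : k * L ≤ n.choose 2 := by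
    rw [← sum_card_edgeFinset_colorGraph f]
    simpa using sum_le_sum fun i (_ : i ∈ univ) => hL i (hf i)
  omega

theorem exists_hasIndep_of_choose_lt {m : ℕ} (h : n.choose 2 < k * (n + 1 - m))
    (f : Sym2 (Fin n) → Fin k) : ∃ i, HasIndep f i m := by
  refine exists_hasIndep_of_choose_lt_mul _ (fun i hi => ?_) h
  by_contra! hE
  obtain ⟨s, hs, hm⟩ :=
    (colorGraph f i).exists_isIndepSet_le_card_of_card_edgeFinset_add_le (m := m)
      (by rw [Fintype.card_fin]; omega)
  exact hi (hasIndep_of_isIndepSet hs hm)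

theorem exists_hasIndep_of_choose_lt_of_two_mul_le {m : ℕ}
    (h : n.choose 2 < k * (n + 2 - m)) (hm : 2 * m ≤ n + 1)
    (f : Sym2 (Fin n) → Fin k) : ∃ i, HasIndep f i m := by
  refine exists_hasIndep_of_choose_lt_mul _ (fun i hi => ?_) h
  by_contra! hE
  obtain ⟨s, hs, hm⟩ :=
    (colorGraph f i).exists_isIndepSet_le_card_of_card_edgeFinset_add_le_succ (m := m)
      (by rw [Fintype.card_fin]; omega) (by rw [Fintype.card_fin]; omega)
  exact hi (hasIndep_of_isIndepSet hs hm)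

theorem exists_forall_not_hasIndep_self (hk₀ : 0 < k) (hk : k ≤ n.choose 2) :
    ∃ f : Sym2 (Fin n) → Fin k, ∀ i, ¬ HasIndep f i n := by
  have : Nonempty (Fin k) := ⟨⟨0, hk₀⟩⟩
  obtain ⟨g⟩ : Nonempty (Fin k ↪ (⊤ : SimpleGraph (Fin n)).edgeSet) :=
    Function.Embedding.nonempty_of_card_le <| by
      rwa [Fintype.card_fin, ← SimpleGraph.edgeFinset_card,
        SimpleGraph.card_edgeFinset_top_eq_card_choose_two, Fintype.card_fin]
  have hg : Function.Injective fun i => (g i : Sym2 (Fin n)) :=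
    Subtype.val_injective.comp g.injective
  refine ⟨Function.invFun fun i => (g i : Sym2 (Fin n)), fun i =>
    not_hasIndep_of_forall_card_lt fun s hs => ?_⟩
  have hcol : Function.invFun _ (g i : Sym2 (Fin n)) = i := Function.leftInverse_invFun hg i
  have hedge := (g i).2
  generalize (g i : Sym2 (Fin n)) = e at hcol hedge
  induction e using Sym2.ind with
  | h x y =>
    rw [SimpleGraph.mem_edgeSet, SimpleGraph.top_adj] at hedge
    simpa using hs.card_lt_of_adj (show (colorGraph _ i).Adj x y from ⟨hedge, hcol⟩)

theorem forall_exists_hasIndep_mono {m : Fin k → ℕ} {a b : ℕ} (hab : a ≤ b)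
    (ha : ∀ f : Sym2 (Fin a) → Fin k, ∃ i, HasIndep f i (m i)) (g : Sym2 (Fin b) → Fin k) :
    ∃ i, HasIndep g i (m i) := by
  obtain ⟨i, s, hcard, hind⟩ := ha fun e => g (e.map (Fin.castLE hab))
  refine ⟨i, s.map (Fin.castLEEmb hab), by rw [card_map, hcard], ?_⟩
  simp only [mem_map, Fin.castLEEmb_apply]
  rintro _ ⟨x, hx, rfl⟩ _ ⟨y, hy, rfl⟩ hxy
  simpa using hind x hx y hy (ne_of_apply_ne _ hxy)

theorem cRamsey_eq_succ {m : Fin k → ℕ}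
    (hup : ∀ f : Sym2 (Fin (n + 1)) → Fin k, ∃ i, HasIndep f i (m i))
    (hlow : ∃ f : Sym2 (Fin n) → Fin k, ∀ i, ¬ HasIndep f i (m i)) : cRamsey m = n + 1 := by
  refine le_antisymm (Nat.sInf_le hup) (le_csInf ⟨_, hup⟩ fun b hb => ?_)
  by_contra! hlt
  obtain ⟨f, hf⟩ := hlow
  obtain ⟨i, hi⟩ := forall_exists_hasIndep_mono (Nat.lt_succ_iff.1 hlt) hb f
  exact hf i hi

end Colorings

/-- On `ℤ/7`, class `c < 7` contains the disjoint edges `{c ± 1}` and `{c ± 2}` (as `4 = 2⁻¹`);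
the remaining cycle edges `{j, j + 1}` go to class `7 + j % 3`. -/
def nearFactorizationColoring (e : Sym2 (Fin 7)) : Fin 10 :=
  let a := e.inf.val
  let b := e.sup.val
  Fin.ofNat 10 (if b = a + 1 then 7 + a % 3 else if b = a + 6 then 7 else (a + b) * 4 % 7)

theorem nearFactorizationColoring_avoids (i : Fin 10) (v : Fin 7) :
    ∃ x y, (colorGraph nearFactorizationColoring i).Adj x y ∧ x ≠ v ∧ y ≠ v := by
  revert i v
  decide

theorem nearFactorizationColoring_not_hasIndep (i : Fin 10) :
    ¬ HasIndep nearFactorizationColoring i 6 :=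
  not_hasIndep_of_forall_card_lt fun _ hs => by
    have := hs.card_add_one_lt (nearFactorizationColoring_avoids i)
    simp only [Fintype.card_fin] at this
    omega

/-- The round-robin one-factorization of `K₁₀` on `ℤ/9 ∪ {∞}`, with `∞ = 9`: class `c` is the
perfect matching `{c, ∞}`, `{x, 2c - x}` (as `5 = 2⁻¹`), with classes `7` and `8` merged. -/
def roundRobinColoring (e : Sym2 (Fin 10)) : Fin 8 :=
  let a := e.inf.val
  let b := e.sup.val
  Fin.ofNat 8 (min 7 (if b = 9 then a else (a + b) * 5 % 9))

def roundRobinPartner (i : Fin 8) (x : Fin 10) : Fin 10 :=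
  Fin.ofNat 10
    (if x.val = 9 then i.val else if x.val = i.val then 9 else (2 * i.val + 9 - x.val) % 9)

theorem roundRobinPartner_involutive (i : Fin 8) : Function.Involutive (roundRobinPartner i) := by
  intro x
  revert i x
  decide

theorem roundRobinColoring_adj_partner (i : Fin 8) (x : Fin 10) :
    (colorGraph roundRobinColoring i).Adj x (roundRobinPartner i x) := by
  revert i x
  decide

theorem roundRobinColoring_not_hasIndep (i : Fin 8) : ¬ HasIndep roundRobinColoring i 6 :=
  not_hasIndep_of_forall_card_lt fun _ hs => by
    have := hs.two_mul_card_le (roundRobinPartner_involutive i)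
      (roundRobinColoring_adj_partner i)
    simp only [Fintype.card_fin] at this
    omega

/-- `R̄(4;6) = 5`; `R̄(5;k) = 6` for `8 ≤ k ≤ 10`; `R̄(6;8) = 11`;
`R̄(6;10) = 8`; and `R̄(6;k) = 7` for `11 ≤ k ≤ 15`. -/
theorem cRamseyU_small_values :
    cRamseyU 4 6 = 5 ∧
      (∀ k : ℕ, 8 ≤ k → k ≤ 10 → cRamseyU 5 k = 6) ∧
      cRamseyU 6 8 = 11 ∧ cRamseyU 6 10 = 8 ∧
      (∀ k : ℕ, 11 ≤ k → k ≤ 15 → cRamseyU 6 k = 7) := by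
  refine ⟨?_, fun k hk₁ hk₂ => ?_, ?_, ?_, fun k hk₁ hk₂ => ?_⟩
  · exact cRamsey_eq_succ (exists_hasIndep_of_choose_lt (by decide))
      (exists_forall_not_hasIndep_self (by norm_num) (by decide))
  · exact cRamsey_eq_succ (exists_hasIndep_of_choose_lt (by rw [Nat.choose_two_right]; omega))
      (exists_forall_not_hasIndep_self (by omega) (by rw [Nat.choose_two_right]; omega))
  · exact cRamsey_eq_succ (exists_hasIndep_of_choose_lt_of_two_mul_le (by decide) (by norm_num))
      ⟨roundRobinColoring, roundRobinColoring_not_hasIndep⟩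
  · exact cRamsey_eq_succ (exists_hasIndep_of_choose_lt (by decide))
      ⟨nearFactorizationColoring, nearFactorizationColoring_not_hasIndep⟩
  · exact cRamsey_eq_succ (exists_hasIndep_of_choose_lt (by rw [Nat.choose_two_right]; omega))
      (exists_forall_not_hasIndep_self (by omega) (by rw [Nat.choose_two_right]; omega))
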